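/- arXiv:2204.03602 — 3 statements merged into one kernel-verified Lean document; each statement's English description precedes it below -/
import Mathlib

section
/- The normalizing factor of the trimodal family admits the closed form Z_θ = (ρ+δ)σ + δσ·(E[G(−α√Y)] − E[G(α√Y)]); that is, σ·∫_ℝ [ρ + δ·T(w; α, p)]·g(w) dw = (ρ+δ)σ + δσ·( ∫₀^∞ G(−α√y)·y^{p−1}e^{−y}/Γ(p) dy − ∫₀^∞ G(α√y)·y^{p−1}e^{−y}/Γ(p) dy ). In particular the function f(·; θ) integrates to 1, so it is a probability density function. -/
open MeasureTheory Real Set Filter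

noncomputable def lincGamma (p u : ℝ) : ℝ := ∫ w in (0:ℝ)..u, w ^ (p - 1) * Real.exp (-w)

noncomputable def Tfun (p α x : ℝ) : ℝ := lincGamma p (x ^ 2 / α ^ 2) / Real.Gamma p

noncomputable def gammaPDF (p y : ℝ) : ℝ := y ^ (p - 1) * Real.exp (-y) / Real.Gamma p

noncomputable def Znorm (p σ α ρ δ : ℝ) (g : ℝ → ℝ) : ℝ :=
  σ * ∫ w : ℝ, (ρ + δ * Tfun p α w) * g w

noncomputable def tdPDF (p μ σ α ρ δ : ℝ) (g : ℝ → ℝ) (x : ℝ) : ℝ :=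
  (1 / Znorm p σ α ρ δ g) * (ρ + δ * Tfun p α ((x - μ) / σ)) * g ((x - μ) / σ)

noncomputable def cdfOf (d : ℝ → ℝ) (x : ℝ) : ℝ := ∫ t in Iic x, d t

/- ## Auxiliary lemmas -/

lemma psi_intOn {p : ℝ} (hp : 0 < p) :
    IntegrableOn (fun y : ℝ => y ^ (p - 1) * Real.exp (-y)) (Ioi 0) := by
  exact (Real.GammaIntegral_convergent hp).congr_fun (fun y _ => mul_comm _ _)
    measurableSet_Ioi

lemma gammaPDF_intOn {p : ℝ} (hp : 0 < p) : IntegrableOn (gammaPDF p) (Ioi 0) := by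
  have := (psi_intOn hp).div_const (Real.Gamma p)
  exact this

lemma gammaPDF_nonneg {p : ℝ} (hp : 0 < p) {y : ℝ} (hy : 0 ≤ y) : 0 ≤ gammaPDF p y := by
  unfold gammaPDF
  have := Real.Gamma_pos_of_pos hp
  positivity

lemma gammaPDF_meas (p : ℝ) : Measurable (gammaPDF p) := by
  unfold gammaPDF; fun_prop

lemma gammaPDF_int_one {p : ℝ} (hp : 0 < p) : ∫ y in Ioi (0:ℝ), gammaPDF p y = 1 := by
  have hΓ : Real.Gamma p = ∫ y in Ioi (0:ℝ), y ^ (p - 1) * Real.exp (-y) := by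
    rw [Real.Gamma_eq_integral hp]
    exact setIntegral_congr_fun measurableSet_Ioi (fun y _ => mul_comm _ _)
  have hΓpos := Real.Gamma_pos_of_pos hp
  unfold gammaPDF
  rw [integral_div, ← hΓ, div_self hΓpos.ne']

lemma Tfun_eq {p α : ℝ} (hp : 0 < p) (hα : 0 < α) (w : ℝ) :
    Tfun p α w = ∫ y in Ioi (0:ℝ), (Iic (w ^ 2 / α ^ 2)).indicator (gammaPDF p) y := by
  have hu : (0:ℝ) ≤ w ^ 2 / α ^ 2 := by positivity
  rw [setIntegral_indicator measurableSet_Iic, Ioi_inter_Iic]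
  unfold Tfun lincGamma gammaPDF
  rw [intervalIntegral.integral_of_le hu, integral_div]

lemma mfun_mono {p : ℝ} (hp : 0 < p) :
    Monotone (fun u : ℝ => ∫ y in Ioi (0:ℝ), (Iic u).indicator (gammaPDF p) y) := by
  intro u v huv
  simp only [setIntegral_indicator measurableSet_Iic, Ioi_inter_Iic]
  refine setIntegral_mono_set ((gammaPDF_intOn hp).mono_set Ioc_subset_Ioi_self) ?_ ?_
  · filter_upwards [ae_restrict_mem measurableSet_Ioc] with y hy
    exact gammaPDF_nonneg hp hy.1.le
  · exact (Ioc_subset_Ioc_right huv).eventuallyLE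

lemma Tfun_meas {p α : ℝ} (hp : 0 < p) (hα : 0 < α) : Measurable (Tfun p α) := by
  have : Tfun p α = (fun u : ℝ => ∫ y in Ioi (0:ℝ), (Iic u).indicator (gammaPDF p) y) ∘
      (fun w => w ^ 2 / α ^ 2) := by
    funext w; exact Tfun_eq hp hα w
  rw [this]
  exact (mfun_mono hp).measurable.comp (by fun_prop)

lemma Tfun_nonneg {p α : ℝ} (hp : 0 < p) (hα : 0 < α) (w : ℝ) : 0 ≤ Tfun p α w := by
  rw [Tfun_eq hp hα w]
  refine setIntegral_nonneg measurableSet_Ioi (fun y hy => ?_)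
  rw [Set.indicator_apply]
  split
  · exact gammaPDF_nonneg hp (le_of_lt hy)
  · exact le_rfl

lemma Tfun_le_one {p α : ℝ} (hp : 0 < p) (hα : 0 < α) (w : ℝ) : Tfun p α w ≤ 1 := by
  rw [Tfun_eq hp hα w, setIntegral_indicator measurableSet_Iic, Ioi_inter_Iic,
    ← gammaPDF_int_one hp]
  refine setIntegral_mono_set (gammaPDF_intOn hp) ?_ Ioc_subset_Ioi_self.eventuallyLE
  filter_upwards [ae_restrict_mem measurableSet_Ioi] with y hy
  exact gammaPDF_nonneg hp (le_of_lt hy)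

lemma Tfun_pos {p α : ℝ} (hp : 0 < p) (hα : 0 < α) {w : ℝ} (hw : w ≠ 0) : 0 < Tfun p α w := by
  have hu : (0:ℝ) < w ^ 2 / α ^ 2 := div_pos (by positivity) (by positivity)
  have hΓ := Real.Gamma_pos_of_pos hp
  refine div_pos ?_ hΓ
  refine intervalIntegral.intervalIntegral_pos_of_pos_on ?_ ?_ hu
  · exact (intervalIntegral.intervalIntegrable_rpow' (by linarith)).mul_continuousOn
      (Continuous.continuousOn (by fun_prop))
  · intro x hx
    have hx0 : 0 < x := hx.1
    positivity

/- ## The main theorem -/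

/-- closed form of the normalizing factor and `f` integrates to 1. -/
theorem stmt0 (p μ σ α ρ δ : ℝ) (hp : 0 < p) (hσ : 0 < σ) (hα : 0 < α)
    (hρ : 0 ≤ ρ) (hδ : 0 ≤ δ) (hρδ : 0 < ρ + δ)
    (g : ℝ → ℝ) (hg0 : ∀ x, 0 ≤ g x) (hgm : Measurable g)
    (hgi : Integrable g) (hg1 : (∫ x : ℝ, g x) = 1) :
    Znorm p σ α ρ δ g
      = (ρ + δ) * σ
        + δ * σ * ((∫ y in Ioi (0:ℝ), cdfOf g (-α * Real.sqrt y) * gammaPDF p y)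
            - (∫ y in Ioi (0:ℝ), cdfOf g (α * Real.sqrt y) * gammaPDF p y))
    ∧ (∫ x : ℝ, tdPDF p μ σ α ρ δ g x) = 1 := by
  have hΓ := Real.Gamma_pos_of_pos hp
  -- cdf facts
  have cdf_mono : Monotone (cdfOf g) := fun a b hab =>
    setIntegral_mono_set hgi.integrableOn (ae_of_all _ hg0)
      ((Iic_subset_Iic.mpr hab).eventuallyLE)
  have cdf_nonneg : ∀ x, 0 ≤ cdfOf g x := fun x =>
    setIntegral_nonneg measurableSet_Iic fun t _ => hg0 t
  have cdf_le_one : ∀ x, cdfOf g x ≤ 1 := fun x => by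
    have := setIntegral_le_integral (s := Iic x) hgi (ae_of_all _ hg0)
    rw [hg1] at this; exact this
  have cdf_meas : Measurable (cdfOf g) := cdf_mono.measurable
  set φ : ℝ → ℝ := gammaPDF p with hφdef
  have hφint : IntegrableOn φ (Ioi 0) := gammaPDF_intOn hp
  -- T * g integrable
  have hTGi : Integrable (fun w => Tfun p α w * g w) := by
    refine hgi.bdd_mul (c := 1) (Tfun_meas hp hα).aestronglyMeasurable (ae_of_all _ fun w => ?_)
    rw [Real.norm_eq_abs, abs_of_nonneg (Tfun_nonneg hp hα w)]
    exact Tfun_le_one hp hα w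
  -- the key Fubini computation
  set F : ℝ → ℝ → ℝ := fun w y => (Iic (w ^ 2 / α ^ 2)).indicator φ y * g w with hFdef
  have step1 : ∀ w : ℝ, Tfun p α w * g w = ∫ y in Ioi (0:ℝ), F w y := by
    intro w
    rw [Tfun_eq hp hα w, ← integral_mul_const]
  set S : Set (ℝ × ℝ) := {q | q.2 ≤ q.1 ^ 2 / α ^ 2} with hSdef
  have hSm : MeasurableSet S := measurableSet_le measurable_snd (by fun_prop)
  have huncurry : Function.uncurry F = S.indicator (fun q => φ q.2 * g q.1) := by
    funext q
    by_cases h : q.2 ≤ q.1 ^ 2 / α ^ 2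
    · rw [Set.indicator_of_mem (show q ∈ S from h), Function.uncurry, hFdef]
      simp only []
      rw [Set.indicator_of_mem (show q.2 ∈ Iic (q.1 ^ 2 / α ^ 2) from h)]
    · rw [Set.indicator_of_notMem (show q ∉ S from h), Function.uncurry, hFdef]
      simp only []
      rw [Set.indicator_of_notMem (show q.2 ∉ Iic (q.1 ^ 2 / α ^ 2) by simpa using h), zero_mul]
  have hprod : volume.prod (volume.restrict (Ioi (0:ℝ)))
      = (volume.prod volume).restrict ((univ : Set ℝ) ×ˢ Ioi 0) := by
    rw [← Measure.prod_restrict, Measure.restrict_univ]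
  have hFi : Integrable (Function.uncurry F) (volume.prod (volume.restrict (Ioi 0))) := by
    rw [huncurry]
    have hbase : Integrable (fun q : ℝ × ℝ => g q.1 * φ q.2)
        (volume.prod (volume.restrict (Ioi 0))) := hgi.mul_prod hφint
    refine hbase.mono' ?_ ?_
    · exact ((((gammaPDF_meas p).comp measurable_snd).mul
        (hgm.comp measurable_fst)).indicator hSm).aestronglyMeasurable
    · rw [hprod]
      filter_upwards [ae_restrict_mem (MeasurableSet.univ.prod measurableSet_Ioi)] with q hq
      have hq2 : (0:ℝ) < q.2 := hq.2
      have h1 : 0 ≤ φ q.2 * g q.1 := mul_nonneg (gammaPDF_nonneg hp hq2.le) (hg0 _)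
      rw [Real.norm_eq_abs, Set.indicator_apply]
      split
      · rw [abs_of_nonneg h1]; nlinarith
      · simp only [abs_zero]
        exact mul_nonneg (hg0 _) (gammaPDF_nonneg hp hq2.le)
  have hswap : (∫ w : ℝ, ∫ y in Ioi (0:ℝ), F w y) = ∫ y in Ioi (0:ℝ), ∫ w : ℝ, F w y :=
    MeasureTheory.integral_integral_swap hFi
  -- inner integral
  have inner : ∀ y ∈ Ioi (0:ℝ), (∫ w : ℝ, F w y)
      = (cdfOf g (-α * Real.sqrt y) + (1 - cdfOf g (α * Real.sqrt y))) * φ y := by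
    intro y hy
    have hy0 : (0:ℝ) < y := hy
    set a : ℝ := α * Real.sqrt y with hadef
    have hapos : 0 < a := mul_pos hα (Real.sqrt_pos.mpr hy0)
    have hsq : Real.sqrt y ^ 2 = y := Real.sq_sqrt hy0.le
    have hset : ∀ w : ℝ, (y ≤ w ^ 2 / α ^ 2) ↔ w ∈ Iic (-a) ∪ Ici a := by
      intro w
      have h1 : y ≤ w ^ 2 / α ^ 2 ↔ a ^ 2 ≤ w ^ 2 := by
        rw [le_div_iff₀ (by positivity)]
        constructor <;> intro h <;> nlinarith
      have h2 : a ^ 2 ≤ w ^ 2 ↔ a ≤ |w| := by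
        rw [← Real.sqrt_sq_eq_abs, Real.le_sqrt hapos.le (sq_nonneg w)]
      rw [h1, h2, le_abs]
      simp only [mem_union, mem_Iic, mem_Ici, le_neg]
      tauto
    have hmeasU : MeasurableSet (Iic (-a) ∪ Ici a) :=
      measurableSet_Iic.union measurableSet_Ici
    have hneg : -a = -α * Real.sqrt y := by rw [hadef]; ring
    calc (∫ w : ℝ, F w y)
        = ∫ w : ℝ, ((Iic (-a) ∪ Ici a).indicator g w) * φ y := by
          refine integral_congr_ae (Eventually.of_forall fun w => ?_)
          by_cases h : y ≤ w ^ 2 / α ^ 2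
          · rw [hFdef]
            simp only []
            rw [Set.indicator_of_mem (mem_Iic.mpr h),
              Set.indicator_of_mem ((hset w).mp h), mul_comm]
          · rw [hFdef]
            simp only []
            rw [Set.indicator_of_notMem (by simpa using h),
              Set.indicator_of_notMem (fun hm => h ((hset w).mpr hm)), zero_mul, zero_mul]
      _ = (∫ w : ℝ, (Iic (-a) ∪ Ici a).indicator g w) * φ y := integral_mul_const _ _
      _ = (cdfOf g (-α * Real.sqrt y) + (1 - cdfOf g (α * Real.sqrt y))) * φ y := by
          congr 1
          rw [integral_indicator hmeasU,
            setIntegral_union (Set.Iic_disjoint_Ici.mpr (by intro h; linarith))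
              measurableSet_Ici hgi.integrableOn hgi.integrableOn]
          have h2 : ∫ w in Ici a, g w = 1 - cdfOf g a := by
            have h3 := intervalIntegral.integral_Iic_add_Ioi (b := a) hgi.integrableOn hgi.integrableOn
            rw [hg1] at h3
            rw [integral_Ici_eq_integral_Ioi]
            have : cdfOf g a = ∫ w in Iic a, g w := rfl
            linarith [this]
          rw [h2, hneg]
          rfl
  -- outer integral and splitting
  have hcdfc1 : Measurable (fun y : ℝ => cdfOf g (-α * Real.sqrt y)) :=
    cdf_meas.comp (by fun_prop)
  have hcdfc2 : Measurable (fun y : ℝ => cdfOf g (α * Real.sqrt y)) :=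
    cdf_meas.comp (by fun_prop)
  have hbd : ∀ x : ℝ, |cdfOf g x| ≤ 1 := fun x =>
    abs_le.mpr ⟨by linarith [cdf_nonneg x], cdf_le_one x⟩
  have hi1 : Integrable (fun y => cdfOf g (-α * Real.sqrt y) * φ y)
      (volume.restrict (Ioi 0)) :=
    hφint.bdd_mul (c := 1) hcdfc1.aestronglyMeasurable (ae_of_all _ fun y => hbd _)
  have hi2 : Integrable (fun y => cdfOf g (α * Real.sqrt y) * φ y)
      (volume.restrict (Ioi 0)) :=
    hφint.bdd_mul (c := 1) hcdfc2.aestronglyMeasurable (ae_of_all _ fun y => hbd _)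
  have key : (∫ w : ℝ, Tfun p α w * g w)
      = 1 + (∫ y in Ioi (0:ℝ), cdfOf g (-α * Real.sqrt y) * gammaPDF p y)
          - (∫ y in Ioi (0:ℝ), cdfOf g (α * Real.sqrt y) * gammaPDF p y) := by
    calc (∫ w : ℝ, Tfun p α w * g w)
        = ∫ w : ℝ, ∫ y in Ioi (0:ℝ), F w y :=
          integral_congr_ae (Eventually.of_forall step1)
      _ = ∫ y in Ioi (0:ℝ), ∫ w : ℝ, F w y := hswap
      _ = ∫ y in Ioi (0:ℝ),
            (cdfOf g (-α * Real.sqrt y) + (1 - cdfOf g (α * Real.sqrt y))) * φ y :=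
          setIntegral_congr_fun measurableSet_Ioi fun y hy => inner y hy
      _ = ∫ y in Ioi (0:ℝ),
            (cdfOf g (-α * Real.sqrt y) * φ y + (φ y - cdfOf g (α * Real.sqrt y) * φ y)) := by
          refine setIntegral_congr_fun measurableSet_Ioi fun y _ => ?_
          ring
      _ = 1 + (∫ y in Ioi (0:ℝ), cdfOf g (-α * Real.sqrt y) * gammaPDF p y)
            - (∫ y in Ioi (0:ℝ), cdfOf g (α * Real.sqrt y) * gammaPDF p y) := by
          have hi3 : Integrable (fun y => φ y - cdfOf g (α * Real.sqrt y) * φ y)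
              (volume.restrict (Ioi 0)) := hφint.sub hi2
          rw [integral_add hi1 hi3, integral_sub hφint hi2, gammaPDF_int_one hp]
          ring
  -- assembling the normalizing constant
  have hJ : (∫ w : ℝ, (ρ + δ * Tfun p α w) * g w)
      = ρ + δ * (∫ w : ℝ, Tfun p α w * g w) := by
    have hfe : (fun w => (ρ + δ * Tfun p α w) * g w)
        = fun w => ρ * g w + δ * (Tfun p α w * g w) := by funext w; ring
    rw [hfe, integral_add (hgi.const_mul ρ) (hTGi.const_mul δ),
      MeasureTheory.integral_const_mul, MeasureTheory.integral_const_mul, hg1, mul_one]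
  have hZeq : Znorm p σ α ρ δ g = σ * (∫ w : ℝ, (ρ + δ * Tfun p α w) * g w) := rfl
  constructor
  · rw [hZeq, hJ, key]; ring
  -- positivity of the normalizing constant
  · have hI0 : 0 ≤ ∫ w : ℝ, Tfun p α w * g w :=
      integral_nonneg fun w => mul_nonneg (Tfun_nonneg hp hα w) (hg0 w)
    have hJpos : 0 < ∫ w : ℝ, (ρ + δ * Tfun p α w) * g w := by
      rw [hJ]
      by_cases hρ' : 0 < ρ
      · have : 0 ≤ δ * ∫ w : ℝ, Tfun p α w * g w := mul_nonneg hδ hI0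
        linarith
      · have hρ0 : ρ = 0 := le_antisymm (not_lt.mp hρ') hρ
        have hδ' : 0 < δ := by rw [hρ0] at hρδ; linarith
        have hIpos : 0 < ∫ w : ℝ, Tfun p α w * g w := by
          rw [integral_pos_iff_support_of_nonneg
            (fun w => mul_nonneg (Tfun_nonneg hp hα w) (hg0 w)) hTGi]
          have hg_supp : 0 < volume (Function.support g) :=
            (integral_pos_iff_support_of_nonneg hg0 hgi).mp (by rw [hg1]; norm_num)
          have hsub : Function.support g \ {0}
              ⊆ Function.support (fun w => Tfun p α w * g w) := by
            intro w hw
            have hw0 : w ≠ 0 := by simpa using hw.2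
            exact mul_ne_zero (Tfun_pos hp hα hw0).ne' hw.1
          calc (0:ENNReal) < volume (Function.support g \ {0}) := by
                rw [measure_diff_null (measure_singleton 0)]; exact hg_supp
            _ ≤ _ := measure_mono hsub
        rw [hρ0]
        have : 0 < δ * ∫ w : ℝ, Tfun p α w * g w := mul_pos hδ' hIpos
        linarith
    have hZpos : 0 < Znorm p σ α ρ δ g := by rw [hZeq]; exact mul_pos hσ hJpos
    have hZne : Znorm p σ α ρ δ g ≠ 0 := hZpos.ne'
    set Φ : ℝ → ℝ := fun w => (ρ + δ * Tfun p α w) * g w with hΦdef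
    have h1 : (∫ x : ℝ, tdPDF p μ σ α ρ δ g x)
        = (1 / Znorm p σ α ρ δ g) * ∫ x : ℝ, Φ ((x - μ) / σ) := by
      rw [← MeasureTheory.integral_const_mul]
      exact integral_congr_ae (Eventually.of_forall fun x => mul_assoc _ _ _)
    have h2 : (∫ x : ℝ, Φ ((x - μ) / σ)) = σ * ∫ w : ℝ, Φ w := by
      have h3 : (∫ x : ℝ, Φ ((x - μ) / σ)) = ∫ x : ℝ, (fun t => Φ (t / σ)) (x - μ) := rfl
      rw [h3, integral_sub_right_eq_self (fun t => Φ (t / σ)) μ,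
        MeasureTheory.Measure.integral_comp_div Φ σ, abs_of_pos hσ, smul_eq_mul]
    rw [h1, h2]
    have h4 : Znorm p σ α ρ δ g = σ * ∫ w : ℝ, Φ w := rfl
    rw [← h4, one_div_mul_cancel hZne]
end

section
/- For every x ∈ ℝ, the cumulative distribution function F(x; θ) = ∫_{−∞}^x f(t; θ) dt of X ~ TD(θ) satisfies, with u = (x−μ)/σ: F(x; θ) = (ρσ/Z_θ)·G(u) + (δσ/Z_θ)·{ E[G(−α√Y)] + T(u; α, p)·G(u) } − (δσ/Z_θ)·{ E[𝟙{Y ≤ (u/α)²}·G(−α√Y)]·𝟙{x < μ} + E[𝟙{Y ≤ (u/α)²}·G(α√Y)]·𝟙{x ≥ μ} }, where E[𝟙{Y ≤ c}·G(±α√Y)] = ∫₀^c G(±α√y)·y^{p−1}e^{−y}/Γ(p) dy. -/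
open MeasureTheory Real Set Filter

/-! After the substitution `w = (t - μ) / σ`, everything is explicit except
`∫_{w ≤ u} T(w) g(w) dw = P(W ≤ u, Y < (W/α)²)`. Integrating first in `W` (Fubini) gives
`E[P(W ≤ u, |W| > α√Y)]`, and `P(W ≤ u, |W| > s) = G(-s) + G(u) - G(max (-s) (min u s))`.
The last two terms cancel unless `s < |u|`, i.e. `Y < (u/α)²`, and then the clamped point is `±s`
with the sign of `u`; this produces the truncated expectations of the formula. -/

section cdfOf

variable {g : ℝ → ℝ}

lemma cdfOf_sub_cdfOf (hg : Integrable g) (a b : ℝ) :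
    cdfOf g b - cdfOf g a = ∫ t in a..b, g t :=
  intervalIntegral.integral_Iic_sub_Iic hg.integrableOn hg.integrableOn

lemma continuous_cdfOf (hg : Integrable g) : Continuous (cdfOf g) := by
  have h : cdfOf g = fun x => cdfOf g 0 + ∫ t in (0 : ℝ)..x, g t := by
    funext x
    rw [← cdfOf_sub_cdfOf hg, add_sub_cancel]
  rw [h]
  exact continuous_const.add
    (intervalIntegral.continuous_primitive (fun _ _ => hg.intervalIntegrable) 0)

lemma norm_cdfOf_le (hg : Integrable g) (x : ℝ) : ‖cdfOf g x‖ ≤ ∫ t, ‖g t‖ :=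
  (norm_integral_le_integral_norm _).trans
    (setIntegral_le_integral hg.norm (ae_of_all _ fun _ => norm_nonneg _))

lemma setIntegral_Icc_eq_cdfOf_sub (hg : Integrable g) (a b : ℝ) :
    ∫ t in Icc a b, g t = cdfOf g (max a b) - cdfOf g a := by
  have h : Ioc a b = Ioc a (max a b) := by
    rcases le_total a b with hab | hab
    · rw [max_eq_right hab]
    · rw [max_eq_left hab, Ioc_self, Ioc_eq_empty_of_le hab]
  rw [integral_Icc_eq_integral_Ioc, h, ← intervalIntegral.integral_of_le (le_max_left a b),
    cdfOf_sub_cdfOf hg]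

lemma setIntegral_Iic_diff_Icc (hg : Integrable g) (u s : ℝ) :
    ∫ w in Iic u \ Icc (-s) s, g w
      = cdfOf g (-s) + (cdfOf g u - cdfOf g (max (-s) (min u s))) := by
  have h : Iic u ∩ Icc (-s) s = Icc (-s) (min u s) := by
    ext w; simp only [mem_inter_iff, mem_Iic, mem_Icc, le_min_iff]; tauto
  have hsplit := integral_inter_add_sdiff (s := Iic u) (measurableSet_Icc (a := -s) (b := s))
    hg.integrableOn
  rw [h, setIntegral_Icc_eq_cdfOf_sub hg] at hsplit
  change _ = cdfOf g u at hsplit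
  linarith

end cdfOf

section gamma

variable {p : ℝ}

lemma integrableOn_gammaPDF (hp : 0 < p) : IntegrableOn (gammaPDF p) (Ioi 0) :=
  ((GammaIntegral_convergent hp).congr_fun (fun _ _ => mul_comm _ _) measurableSet_Ioi).div_const _

lemma Tfun_eq_intervalIntegral (α w : ℝ) :
    Tfun p α w = ∫ y in 0..(w / α) ^ 2, gammaPDF p y := by
  simp only [Tfun, lincGamma, gammaPDF, intervalIntegral.integral_div, div_pow]

lemma Tfun_eq_cdfOf (α w : ℝ) :
    Tfun p α w = cdfOf ((Ioi 0).indicator (gammaPDF p)) ((w / α) ^ 2) := by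
  rw [Tfun_eq_intervalIntegral, cdfOf, setIntegral_indicator measurableSet_Ioi, inter_comm,
    Ioi_inter_Iic, intervalIntegral.integral_of_le (sq_nonneg _)]

variable {g : ℝ → ℝ}

lemma integrable_Tfun_mul (hp : 0 < p) (α : ℝ) (hg : Integrable g) :
    Integrable (fun w => Tfun p α w * g w) := by
  have hγ : Integrable ((Ioi 0).indicator (gammaPDF p)) :=
    (integrable_indicator_iff measurableSet_Ioi).2 (integrableOn_gammaPDF hp)
  rw [show Tfun p α = fun w => cdfOf ((Ioi 0).indicator (gammaPDF p)) ((w / α) ^ 2) from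
    funext (Tfun_eq_cdfOf α)]
  exact hg.bdd_mul ((continuous_cdfOf hγ).comp (by fun_prop)).aestronglyMeasurable
    (ae_of_all _ fun _ => norm_cdfOf_le hγ _)

lemma integrableOn_cdfOf_comp_mul_gammaPDF (hp : 0 < p) (hg : Integrable g) {φ : ℝ → ℝ}
    (hφ : Measurable φ) : IntegrableOn (fun y => cdfOf g (φ y) * gammaPDF p y) (Ioi 0) :=
  (integrableOn_gammaPDF hp).bdd_mul
    ((continuous_cdfOf hg).measurable.comp hφ).aestronglyMeasurable
    (ae_of_all _ fun _ => norm_cdfOf_le hg _)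

end gamma

lemma mem_Icc_neg_mul_sqrt_iff {α y : ℝ} (hα : 0 < α) (hy : 0 ≤ y) (w : ℝ) :
    w ∈ Icc (-(α * √y)) (α * √y) ↔ (w / α) ^ 2 ≤ y := by
  rw [mem_Icc, ← abs_le, ← div_le_iff₀' hα, le_sqrt (by positivity) hy, div_pow, sq_abs,
    ← div_pow]

lemma max_neg_min_eq_ite {s : ℝ} (hs : 0 ≤ s) (u : ℝ) :
    max (-s) (min u s) = if u ∈ Icc (-s) s then u else if u < 0 then -s else s := by
  split_ifs with h hu <;> simp only [mem_Icc, not_and_or, not_le] at h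
  · rw [min_eq_left h.2, max_eq_right h.1]
  · rw [min_eq_left (by linarith), max_eq_left (by grind)]
  · rw [min_eq_right (by grind), max_eq_right (by linarith)]

lemma setIntegral_Iic_Tfun_mul_eq_setIntegral_Ioi {p α : ℝ} (hp : 0 < p) (hα : 0 < α)
    {g : ℝ → ℝ} (hg : Integrable g) (u : ℝ) : ∫ w in Iic u, Tfun p α w * g w
      = ∫ y in Ioi 0, (∫ w in Iic u \ Icc (-(α * √y)) (α * √y), g w) * gammaPDF p y := by
  set S : Set (ℝ × ℝ) := {z | z.2 < (z.1 / α) ^ 2}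
  set F := S.indicator fun z => g z.1 * gammaPDF p z.2
  have hF : Integrable F ((volume.restrict (Iic u)).prod (volume.restrict (Ioi 0))) :=
    (hg.integrableOn.mul_prod (integrableOn_gammaPDF hp)).indicator
      (measurableSet_lt measurable_snd (by fun_prop))
  have hslice_w : ∀ w, ∫ y in Ioi 0, F (w, y) = Tfun p α w * g w := by
    intro w
    have h : ∀ y, F (w, y) = (Iio ((w / α) ^ 2)).indicator (fun y => g w * gammaPDF p y) y :=
      fun _ => rfl
    simp_rw [h]
    rw [setIntegral_indicator measurableSet_Iio, Ioi_inter_Iio, ← integral_Ioc_eq_integral_Ioo,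
      ← intervalIntegral.integral_of_le (sq_nonneg _), intervalIntegral.integral_const_mul,
      ← Tfun_eq_intervalIntegral, mul_comm]
  have hslice_y : ∀ y ∈ Ioi (0 : ℝ), ∫ w in Iic u, F (w, y)
      = (∫ w in Iic u \ Icc (-(α * √y)) (α * √y), g w) * gammaPDF p y := by
    intro y hy
    have h : ∀ w, F (w, y)
        = (Icc (-(α * √y)) (α * √y))ᶜ.indicator (fun w => g w * gammaPDF p y) w := by
      intro w
      simp only [F, S, indicator, mem_ofPred_eq, mem_compl_iff,
        mem_Icc_neg_mul_sqrt_iff hα (le_of_lt hy), not_le]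
    simp_rw [h]
    rw [setIntegral_indicator measurableSet_Icc.compl, ← sdiff_eq, integral_mul_const]
  calc ∫ w in Iic u, Tfun p α w * g w = ∫ w in Iic u, ∫ y in Ioi 0, F (w, y) := by
        simp_rw [hslice_w]
    _ = ∫ y in Ioi 0, ∫ w in Iic u, F (w, y) := integral_integral_swap hF
    _ = _ := setIntegral_congr_fun measurableSet_Ioi hslice_y

lemma setIntegral_Iic_Tfun_mul {p α : ℝ} (hp : 0 < p) (hα : 0 < α) {g : ℝ → ℝ}
    (hg : Integrable g) (u : ℝ) :
    ∫ w in Iic u, Tfun p α w * g w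
      = (∫ y in Ioi 0, cdfOf g (-α * √y) * gammaPDF p y) + Tfun p α u * cdfOf g u
        - ∫ y in 0..(u / α) ^ 2,
            cdfOf g ((if u < 0 then -α else α) * √y) * gammaPDF p y := by
  set ε := if u < 0 then -α else α
  have hε : Measurable fun y : ℝ => ε * √y := by fun_prop
  have hneg : Measurable fun y : ℝ => -α * √y := by fun_prop
  have hpt : ∀ y ∈ Ioi (0 : ℝ),
      (∫ w in Iic u \ Icc (-(α * √y)) (α * √y), g w) * gammaPDF p y
        = cdfOf g (-α * √y) * gammaPDF p y + (Iio ((u / α) ^ 2)).indicator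
          (fun y => cdfOf g u * gammaPDF p y - cdfOf g (ε * √y) * gammaPDF p y) y := by
    intro y hy
    rw [setIntegral_Iic_diff_Icc hg, max_neg_min_eq_ite (by positivity)]
    simp only [mem_Icc_neg_mul_sqrt_iff hα (le_of_lt hy), neg_mul]
    by_cases hu : (u / α) ^ 2 ≤ y
    · rw [if_pos hu, indicator_of_notMem (show y ∉ Iio _ from not_lt.2 hu)]
      ring
    · rw [if_neg hu, indicator_of_mem (show y ∈ Iio _ from not_le.1 hu)]
      simp only [ε]
      split_ifs
      · rw [neg_mul]
        ring
      · ring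
  have hG : IntegrableOn (fun y => cdfOf g u * gammaPDF p y) (Ioi 0) :=
    (integrableOn_gammaPDF hp).const_mul _
  have hGε := integrableOn_cdfOf_comp_mul_gammaPDF hp hg hε
  have hind : IntegrableOn ((Iio ((u / α) ^ 2)).indicator
      fun y => cdfOf g u * gammaPDF p y - cdfOf g (ε * √y) * gammaPDF p y) (Ioi 0) :=
    (hG.sub hGε).indicator measurableSet_Iio
  rw [setIntegral_Iic_Tfun_mul_eq_setIntegral_Ioi hp hα hg,
    setIntegral_congr_fun measurableSet_Ioi hpt,
    integral_add (integrableOn_cdfOf_comp_mul_gammaPDF hp hg hneg) hind,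
    setIntegral_indicator measurableSet_Iio, Ioi_inter_Iio, ← integral_Ioc_eq_integral_Ioo,
    integral_sub (hG.mono_set Ioc_subset_Ioi_self) (hGε.mono_set Ioc_subset_Ioi_self),
    integral_const_mul, ← intervalIntegral.integral_of_le (sq_nonneg _),
    ← intervalIntegral.integral_of_le (sq_nonneg _), ← Tfun_eq_intervalIntegral]
  ring

lemma setIntegral_Iic_comp_sub_div {σ : ℝ} (hσ : 0 < σ) (μ x : ℝ) (h : ℝ → ℝ) :
    ∫ t in Iic x, h ((t - μ) / σ) = σ * ∫ w in Iic ((x - μ) / σ), h w := by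
  set I := Iic ((x - μ) / σ)
  have hpre : (fun t => (t - μ) / σ) ⁻¹' I = Iic x := by
    ext t
    simp only [I, mem_preimage, mem_Iic, div_le_div_iff_of_pos_right hσ, sub_le_sub_iff_right]
  calc ∫ t in Iic x, h ((t - μ) / σ) = ∫ t, I.indicator h ((t - μ) / σ) := by
        rw [← integral_indicator measurableSet_Iic, ← hpre]
        exact integral_congr_ae (ae_of_all _ fun t => indicator_comp_right _)
    _ = ∫ t, I.indicator h (t / σ) :=
        integral_sub_right_eq_self (fun t => I.indicator h (t / σ)) μ
    _ = σ * ∫ w in I, h w := by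
        rw [Measure.integral_comp_div, abs_of_pos hσ, smul_eq_mul,
          integral_indicator measurableSet_Iic]

theorem stmt1_general (p μ σ α ρ δ : ℝ) (hp : 0 < p) (hσ : 0 < σ) (hα : 0 < α)
    (g : ℝ → ℝ) (hgi : Integrable g) :
    ∀ x : ℝ,
      cdfOf (tdPDF p μ σ α ρ δ g) x
        = (ρ * σ / Znorm p σ α ρ δ g) * cdfOf g ((x - μ) / σ)
          + (δ * σ / Znorm p σ α ρ δ g) *
              ((∫ y in Ioi (0:ℝ), cdfOf g (-α * Real.sqrt y) * gammaPDF p y)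
                + Tfun p α ((x - μ) / σ) * cdfOf g ((x - μ) / σ))
          - (δ * σ / Znorm p σ α ρ δ g) *
              ((if x < μ then
                  ∫ y in (0:ℝ)..(((x - μ) / σ / α) ^ 2),
                    cdfOf g (-α * Real.sqrt y) * gammaPDF p y
                else 0)
                + (if μ ≤ x then
                    ∫ y in (0:ℝ)..(((x - μ) / σ / α) ^ 2),
                      cdfOf g (α * Real.sqrt y) * gammaPDF p y
                  else 0)) := by
  intro x
  set u := (x - μ) / σ
  set Z := Znorm p σ α ρ δ g
  have hcdf : cdfOf (tdPDF p μ σ α ρ δ g) x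
      = σ / Z * (ρ * cdfOf g u + δ * ∫ w in Iic u, Tfun p α w * g w) := by
    have hpdf : tdPDF p μ σ α ρ δ g
        = fun t => 1 / Z * (fun w => ρ * g w + δ * (Tfun p α w * g w)) ((t - μ) / σ) := by
      funext t
      simp only [tdPDF, Z]
      ring
    rw [cdfOf, hpdf, integral_const_mul,
      setIntegral_Iic_comp_sub_div hσ μ x (fun w => ρ * g w + δ * (Tfun p α w * g w)),
      integral_add (hgi.integrableOn.const_mul ρ)
        ((integrable_Tfun_mul hp α hgi).integrableOn.const_mul δ),
      integral_const_mul, integral_const_mul, cdfOf]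
    ring
  have hu : x < μ ↔ u < 0 := by rw [div_lt_iff₀ hσ, zero_mul, sub_neg]
  rw [hcdf, setIntegral_Iic_Tfun_mul hp hα hgi u]
  by_cases hxμ : x < μ
  · rw [if_pos (hu.1 hxμ), if_pos hxμ, if_neg (not_le.2 hxμ)]
    ring
  · rw [if_neg (mt hu.2 hxμ), if_neg hxμ, if_pos (not_lt.1 hxμ)]
    ring

/-- closed formula for the CDF of the trimodal distribution. -/
theorem stmt1 (p μ σ α ρ δ : ℝ) (hp : 0 < p) (hσ : 0 < σ) (hα : 0 < α)
    (hρ : 0 ≤ ρ) (hδ : 0 ≤ δ) (hρδ : 0 < ρ + δ)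
    (g : ℝ → ℝ) (hg0 : ∀ x, 0 ≤ g x) (hgm : Measurable g)
    (hgi : Integrable g) (hg1 : (∫ x : ℝ, g x) = 1) :
    ∀ x : ℝ,
      cdfOf (tdPDF p μ σ α ρ δ g) x
        = (ρ * σ / Znorm p σ α ρ δ g) * cdfOf g ((x - μ) / σ)
          + (δ * σ / Znorm p σ α ρ δ g) *
              ((∫ y in Ioi (0:ℝ), cdfOf g (-α * Real.sqrt y) * gammaPDF p y)
                + Tfun p α ((x - μ) / σ) * cdfOf g ((x - μ) / σ))
          - (δ * σ / Znorm p σ α ρ δ g) *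
              ((if x < μ then
                  ∫ y in (0:ℝ)..(((x - μ) / σ / α) ^ 2),
                    cdfOf g (-α * Real.sqrt y) * gammaPDF p y
                else 0)
                + (if μ ≤ x then
                    ∫ y in (0:ℝ)..(((x - μ) / σ / α) ^ 2),
                      cdfOf g (α * Real.sqrt y) * gammaPDF p y
                  else 0)) :=
  stmt1_general p μ σ α ρ δ hp hσ hα g hgi
end

section
/- For all ρ ≥ 0, δ ≥ 0 with ρ + δ > 0, the function R(y) = 2δ·[(1/α²)^p/Γ(p)]·y^{p−1}·e^{−y/α²} − [ρ + δ·γ(p, y/α²)/Γ(p)], y > 0 (the critical-point function of the trimodal normal density, arising from the Gaussian kernel for which 𝔥 ≡ 1), has at most two roots in (0, ∞). -/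
/-! Differentiating, `R'(y)` is a positive multiple of `2(p - 1) - (2/α² + 1) y` when `δ > 0`, so
`R` strictly increases up to `t = 2(p - 1)/(2/α² + 1)` and strictly decreases after it; each
monotone piece contains at most one root. When `δ = 0`, `R ≡ -ρ < 0`. -/

open MeasureTheory Real Set Filter

theorem Set.encard_sep_eq_le_two_of_strictMonoOn_of_strictAntiOn {α β : Type*} [LinearOrder α]
    [Preorder β] {f : α → β} {s : Set α} {t : α} {c : β}
    (hmono : StrictMonoOn f (s ∩ Iic t)) (hanti : StrictAntiOn f (s ∩ Ici t)) :
    {x ∈ s | f x = c}.encard ≤ 2 := by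
  have hle : {x ∈ s ∩ Iic t | f x = c}.encard ≤ 1 :=
    encard_le_one_iff.2 fun a b ha hb => hmono.injOn ha.1 hb.1 (ha.2.trans hb.2.symm)
  have hge : {x ∈ s ∩ Ici t | f x = c}.encard ≤ 1 :=
    encard_le_one_iff.2 fun a b ha hb => hanti.injOn ha.1 hb.1 (ha.2.trans hb.2.symm)
  calc {x ∈ s | f x = c}.encard
      ≤ ({x ∈ s ∩ Iic t | f x = c} ∪ {x ∈ s ∩ Ici t | f x = c}).encard := by
        refine encard_mono fun x hx => ?_
        rcases le_total x t with h | h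
        exacts [Or.inl ⟨⟨hx.1, h⟩, hx.2⟩, Or.inr ⟨⟨hx.1, h⟩, hx.2⟩]
    _ ≤ {x ∈ s ∩ Iic t | f x = c}.encard + {x ∈ s ∩ Ici t | f x = c}.encard :=
        encard_union_le _ _
    _ ≤ 1 + 1 := add_le_add hle hge
    _ = 2 := one_add_one_eq_two

lemma lincGamma_hasDerivAt {p : ℝ} (hp : 0 < p) {u : ℝ} (hu : 0 < u) :
    HasDerivAt (lincGamma p) (u ^ (p - 1) * exp (-u)) u := by
  have hcont : ∀ w, 0 < w → ContinuousAt (fun w : ℝ => w ^ (p - 1) * exp (-w)) w := fun w hw =>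
    (continuousAt_rpow_const w (p - 1) (Or.inl hw.ne')).mul
      (continuous_exp.comp continuous_neg).continuousAt
  apply intervalIntegral.integral_hasDerivAt_right
  · rw [intervalIntegrable_iff_integrableOn_Ioc_of_le hu.le]
    exact ((GammaIntegral_convergent hp).mono_set Ioc_subset_Ioi_self).congr_fun
      (fun w _ => mul_comm _ _) measurableSet_Ioc
  · exact ⟨Ioi 0, Ioi_mem_nhds hu, ContinuousOn.aestronglyMeasurable
      (fun w hw => (hcont w hw).continuousWithinAt) measurableSet_Ioi⟩
  · exact hcont u hu

/-- The function `R` of the statement. -/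
noncomputable def critFun (p α ρ δ y : ℝ) : ℝ :=
  2 * δ * ((1 / α ^ 2) ^ p / Real.Gamma p) * y ^ (p - 1) * Real.exp (-y / α ^ 2)
    - (ρ + δ * lincGamma p (y / α ^ 2) / Real.Gamma p)

section critFun

variable {p α ρ δ : ℝ}

lemma critFun_hasDerivAt (hp : 0 < p) (hα : α ≠ 0) {y : ℝ} (hy : 0 < y) :
    HasDerivAt (critFun p α ρ δ)
      (δ * ((1 / α ^ 2) ^ p / Real.Gamma p) * exp (-y / α ^ 2) * y ^ (p - 2)
        * (2 * (p - 1) - (2 / α ^ 2 + 1) * y)) y := by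
  have hA : (0:ℝ) < α ^ 2 := by positivity
  have hpow : HasDerivAt (fun y : ℝ => y ^ (p - 1)) ((p - 1) * y ^ (p - 1 - 1)) y :=
    hasDerivAt_rpow_const (Or.inl hy.ne')
  have hexp : HasDerivAt (fun y : ℝ => exp (-y / α ^ 2)) (exp (-y / α ^ 2) * (-1 / α ^ 2)) y := by
    simpa [Function.comp_def] using
      (hasDerivAt_exp (-y / α ^ 2)).comp y ((hasDerivAt_id y).neg.div_const (α ^ 2))
  have hinc : HasDerivAt (fun y : ℝ => lincGamma p (y / α ^ 2))
      ((y / α ^ 2) ^ (p - 1) * exp (-(y / α ^ 2)) * (1 / α ^ 2)) y := by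
    simpa [Function.comp_def] using
      (lincGamma_hasDerivAt hp (div_pos hy hA)).comp y ((hasDerivAt_id y).div_const (α ^ 2))
  refine (((hpow.const_mul (2 * δ * ((1 / α ^ 2) ^ p / Real.Gamma p))).mul hexp).sub
    ((hasDerivAt_const y ρ).add ((hinc.const_mul δ).div_const (Real.Gamma p)))).congr_deriv ?_
  have e1 : y ^ (p - 1 - 1) = y ^ (p - 2) := by ring_nf
  have e2 : y ^ (p - 1) = y ^ (p - 2) * y := by
    rw [show p - 1 = p - 2 + 1 by ring, rpow_add hy, rpow_one]
  have e3 : (y / α ^ 2) ^ (p - 1) = y ^ (p - 1) * (1 / α ^ 2) ^ (p - 1) := by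
    rw [div_eq_mul_one_div, mul_rpow hy.le (by positivity)]
  have e4 : (1 / α ^ 2) ^ p = (1 / α ^ 2) ^ (p - 1) * (1 / α ^ 2) := by
    rw [← rpow_add_one (by positivity), sub_add_cancel]
  rw [e1, e3, e4, neg_div, e2]
  ring

lemma critFun_strictMonoOn (hp : 0 < p) (hα : α ≠ 0) (hδ : 0 < δ) :
    StrictMonoOn (critFun p α ρ δ) (Ioi 0 ∩ Iic (2 * (p - 1) / (2 / α ^ 2 + 1))) := by
  refine strictMonoOn_of_deriv_pos ((convex_Ioi 0).inter (convex_Iic _))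
    (fun y hy => (critFun_hasDerivAt hp hα hy.1).continuousAt.continuousWithinAt) ?_
  intro y hy
  rw [interior_inter, interior_Ioi, interior_Iic] at hy
  rw [(critFun_hasDerivAt hp hα hy.1).deriv]
  have hfactor : 0 < 2 * (p - 1) - (2 / α ^ 2 + 1) * y := by
    have := (lt_div_iff₀' (show (0:ℝ) < 2 / α ^ 2 + 1 by positivity)).mp hy.2
    linarith
  have := rpow_pos_of_pos hy.1 (p - 2)
  have := Gamma_pos_of_pos hp
  positivity

lemma critFun_strictAntiOn (hp : 0 < p) (hα : α ≠ 0) (hδ : 0 < δ) :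
    StrictAntiOn (critFun p α ρ δ) (Ioi 0 ∩ Ici (2 * (p - 1) / (2 / α ^ 2 + 1))) := by
  refine strictAntiOn_of_deriv_neg ((convex_Ioi 0).inter (convex_Ici _))
    (fun y hy => (critFun_hasDerivAt hp hα hy.1).continuousAt.continuousWithinAt) ?_
  intro y hy
  rw [interior_inter, interior_Ioi, interior_Ici] at hy
  rw [(critFun_hasDerivAt hp hα hy.1).deriv]
  have hfactor : 2 * (p - 1) - (2 / α ^ 2 + 1) * y < 0 := by
    have := (div_lt_iff₀' (show (0:ℝ) < 2 / α ^ 2 + 1 by positivity)).mp hy.2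
    linarith
  have := rpow_pos_of_pos hy.1 (p - 2)
  have := Gamma_pos_of_pos hp
  exact mul_neg_of_pos_of_neg (by positivity) hfactor

end critFun

theorem stmt13_general (p α ρ δ : ℝ) (hp : 0 < p) (hα : 0 < α)
    (hδ : 0 ≤ δ) (hρδ : 0 < ρ + δ) :
    Set.encard {y ∈ Ioi (0:ℝ) |
        2 * δ * ((1 / α ^ 2) ^ p / Real.Gamma p) * y ^ (p - 1) * Real.exp (-y / α ^ 2)
          - (ρ + δ * lincGamma p (y / α ^ 2) / Real.Gamma p) = 0} ≤ 2 := by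
  change {y ∈ Ioi 0 | critFun p α ρ δ y = 0}.encard ≤ 2
  rcases hδ.eq_or_lt with rfl | hδ
  · have hρ : ρ ≠ 0 := by linarith
    simp [critFun, hρ]
  · exact encard_sep_eq_le_two_of_strictMonoOn_of_strictAntiOn
      (critFun_strictMonoOn hp hα.ne' hδ) (critFun_strictAntiOn hp hα.ne' hδ)

/-- in the Gaussian case, the critical-point function `R` has at most
two roots in (0,∞). -/
theorem stmt13 (p α ρ δ : ℝ) (hp : 0 < p) (hα : 0 < α)
    (hρ : 0 ≤ ρ) (hδ : 0 ≤ δ) (hρδ : 0 < ρ + δ) :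
    Set.encard {y ∈ Ioi (0:ℝ) |
        2 * δ * ((1 / α ^ 2) ^ p / Real.Gamma p) * y ^ (p - 1) * Real.exp (-y / α ^ 2)
          - (ρ + δ * lincGamma p (y / α ^ 2) / Real.Gamma p) = 0} ≤ 2 :=
  stmt13_general p α ρ δ hp hα hδ hρδ
end
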